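/- arXiv:1101.3958 — 5 statements merged into one kernel-verified Lean document; each statement's English description precedes it below -/
import Mathlib

section
/- Let R be a probability measure on a measurable space Ω and let P be a probability measure on Ω with P ≪ R. Then the supremum, over all bounded measurable functions u : Ω → ℝ, of ∫ u dP − log ∫ e^u dR equals the relative entropy H(P|R) ∈ [0, ∞]. -/
open MeasureTheory Real Filter Classical
open scoped ENNReal

/-- Relative entropy `H(P|R) ∈ [0,∞]`: the integral `∫ log(dP/dR) dP` if `P ≪ R`
(with value `+∞` when `log(dP/dR)` is not `P`-integrable, which for probability
measures happens exactly when the positive part of the integral is infinite),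
and `+∞` if `P` is not absolutely continuous with respect to `R`. -/

noncomputable def relEntropy {Ω : Type*} [MeasurableSpace Ω] (P R : Measure Ω) : EReal :=
  if P ≪ R ∧ Integrable (llr P R) P then ((∫ ω, llr P R ω ∂P : ℝ) : EReal) else ⊤

/-! Upper bound: tilting `R` by `u` gives the probability measure `R^u ∝ e^u R`, and
`∫ u dP - log ∫ e^u dR = H(P|R) - H(P|R^u) ≤ H(P|R)` by Gibbs' inequality.

Lower bound: the log-density clamped to `[-n, n]` is a bounded test function `u` with
`∫ e^u dR ≤ 1 + e^{-n}` that dominates `min n (log dP/dR)` `P`-a.e. The negative part of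
`log dP/dR` is `P`-integrable, because `t (log t)⁻ ≤ 1`, so by monotone convergence
`∫ min n (log dP/dR) dP → H(P|R)`, also when `H(P|R) = ∞`. -/

open scoped Topology

section Truncation

variable {α : Type*} [MeasurableSpace α] {μ : Measure α} [IsFiniteMeasure μ] {f : α → ℝ}

lemma integrable_of_abs_le {u : α → ℝ} (hu : Measurable u) {C : ℝ} (hC : ∀ x, |u x| ≤ C) :
    Integrable u μ :=
  .of_bound hu.aestronglyMeasurable C (.of_forall hC)

lemma integrable_exp_of_abs_le {u : α → ℝ} (hu : Measurable u) {C : ℝ}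
    (hC : ∀ x, |u x| ≤ C) : Integrable (fun x ↦ exp (u x)) μ :=
  .of_bound hu.exp.aestronglyMeasurable (exp C) (.of_forall fun x ↦ by
    rw [norm_of_nonneg (exp_pos _).le]
    exact exp_le_exp.2 ((le_abs_self _).trans (hC x)))

lemma min_eq_min_max_zero_add_min_zero {c : ℝ} (hc : 0 ≤ c) (x : ℝ) :
    min c x = min c (max x 0) + min 0 x := by
  rcases le_total 0 x with hx | hx
  · simp [hx]
  · simp [hx, hc, hx.trans hc]

lemma integrable_min_max_zero (hf : AEStronglyMeasurable f μ) {c : ℝ} (hc : 0 ≤ c) :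
    Integrable (fun x ↦ min c (max (f x) 0)) μ :=
  .of_bound (aestronglyMeasurable_const.inf (hf.sup aestronglyMeasurable_const)) c
    (.of_forall fun x ↦ by
      rw [Real.norm_of_nonneg (le_min hc (le_max_right _ _))]
      exact min_le_left _ _)

lemma integrable_min_of_integrable_min_zero (hf : AEStronglyMeasurable f μ)
    (hf_neg : Integrable (fun x ↦ min 0 (f x)) μ) {c : ℝ} (hc : 0 ≤ c) :
    Integrable (fun x ↦ min c (f x)) μ :=
  ((integrable_min_max_zero hf hc).add hf_neg).congr
    (.of_forall fun x ↦ (min_eq_min_max_zero_add_min_zero hc (f x)).symm)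

lemma tendsto_min_natCast (y : ℝ) : Tendsto (fun n : ℕ ↦ min (n : ℝ) y) atTop (𝓝 y) :=
  tendsto_atTop_of_eventually_const (i₀ := ⌈y⌉₊) fun n hn ↦
    min_eq_right ((Nat.le_ceil y).trans (by exact_mod_cast hn))

lemma monotone_min_natCast (y : ℝ) : Monotone fun n : ℕ ↦ min (n : ℝ) y :=
  fun _ _ hmn ↦ min_le_min_right y (by exact_mod_cast hmn)

lemma integrable_of_bddAbove_integral_min_natCast (hf : AEStronglyMeasurable f μ)
    (hf_neg : Integrable (fun x ↦ min 0 (f x)) μ)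
    (h_bdd : BddAbove (Set.range fun n : ℕ ↦ ∫ x, min (n : ℝ) (f x) ∂μ)) :
    Integrable f μ := by
  obtain ⟨M, hM⟩ := h_bdd
  have h_lint (n : ℕ) : ∫⁻ x, ENNReal.ofReal (min (n : ℝ) (max (f x) 0)) ∂μ
      ≤ ENNReal.ofReal (M - ∫ x, min 0 (f x) ∂μ) := by
    rw [← ofReal_integral_eq_lintegral_ofReal (integrable_min_max_zero hf n.cast_nonneg)
      (.of_forall fun x ↦ le_min n.cast_nonneg (le_max_right _ _))]
    refine ENNReal.ofReal_le_ofReal (le_sub_right_of_add_le ?_)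
    rw [← integral_add (integrable_min_max_zero hf n.cast_nonneg) hf_neg]
    simp_rw [← min_eq_min_max_zero_add_min_zero n.cast_nonneg]
    exact hM ⟨n, rfl⟩
  have h_tendsto : Tendsto (fun n : ℕ ↦ ∫⁻ x, ENNReal.ofReal (min (n : ℝ) (max (f x) 0)) ∂μ)
      atTop (𝓝 (∫⁻ x, ENNReal.ofReal (max (f x) 0) ∂μ)) :=
    lintegral_tendsto_of_tendsto_of_monotone
      (fun n ↦ (integrable_min_max_zero hf n.cast_nonneg).aemeasurable.ennreal_ofReal)
      (.of_forall fun _ _ _ hmn ↦ ENNReal.ofReal_le_ofReal (monotone_min_natCast _ hmn))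
      (.of_forall fun x ↦ (ENNReal.continuous_ofReal.tendsto _).comp (tendsto_min_natCast _))
  have h_pos : Integrable (fun x ↦ max (f x) 0) μ :=
    ⟨hf.sup aestronglyMeasurable_const, (hasFiniteIntegral_iff_ofReal
      (.of_forall fun x ↦ le_max_right _ _)).2
      ((le_of_tendsto' h_tendsto h_lint).trans_lt ENNReal.ofReal_lt_top)⟩
  exact (h_pos.add hf_neg).congr (.of_forall fun x ↦ by
    rw [Pi.add_apply, min_comm, max_add_min, add_zero])

lemma tendsto_integral_min_natCast_atTop_of_not_integrable (hf : AEStronglyMeasurable f μ)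
    (hf_neg : Integrable (fun x ↦ min 0 (f x)) μ) (hf_int : ¬ Integrable f μ) :
    Tendsto (fun n : ℕ ↦ ∫ x, min (n : ℝ) (f x) ∂μ) atTop atTop :=
  tendsto_atTop_atTop_of_monotone'
    (fun m n hmn ↦ integral_mono
      (integrable_min_of_integrable_min_zero hf hf_neg m.cast_nonneg)
      (integrable_min_of_integrable_min_zero hf hf_neg n.cast_nonneg)
      fun _ ↦ monotone_min_natCast _ hmn)
    (mt (integrable_of_bddAbove_integral_min_natCast hf hf_neg) hf_int)

lemma tendsto_integral_min_natCast (hf : Integrable f μ) :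
    Tendsto (fun n : ℕ ↦ ∫ x, min (n : ℝ) (f x) ∂μ) atTop (𝓝 (∫ x, f x ∂μ)) :=
  integral_tendsto_of_tendsto_of_monotone
    (fun n ↦ integrable_min_of_integrable_min_zero hf.1 ((integrable_zero _ _ μ).inf hf)
      n.cast_nonneg) hf
    (.of_forall fun x ↦ monotone_min_natCast (f x))
    (.of_forall fun x ↦ tendsto_min_natCast (f x))

end Truncation

section RelEntropy

variable {Ω : Type*} [MeasurableSpace Ω] {P R : Measure Ω}

lemma abs_mul_min_zero_log_le_one {t : ℝ} (ht : 0 ≤ t) : |t * min 0 (log t)| ≤ 1 := by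
  rcases le_total 0 (log t) with h | h
  · simp [h]
  · rw [min_eq_right h, abs_of_nonpos (mul_nonpos_of_nonneg_of_nonpos ht h)]
    linarith [self_sub_one_le_mul_log ht]

lemma integrable_min_zero_llr [SigmaFinite P] [IsFiniteMeasure R] (hPR : P ≪ R) :
    Integrable (fun ω ↦ min 0 (llr P R ω)) P := by
  rw [← integrable_toReal_rnDeriv_mul_iff hPR]
  exact .of_bound ((Measure.measurable_rnDeriv P R).ennreal_toReal.mul
      (measurable_const.min (measurable_llr P R))).aestronglyMeasurable 1
    (.of_forall fun ω ↦ abs_mul_min_zero_log_le_one ENNReal.toReal_nonneg)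

lemma tendsto_integral_min_llr [IsFiniteMeasure P] [IsFiniteMeasure R] (hPR : P ≪ R) :
    Tendsto (fun n : ℕ ↦ ((∫ ω, min (n : ℝ) (llr P R ω) ∂P : ℝ) : EReal)) atTop
      (𝓝 (relEntropy P R)) := by
  by_cases h_int : Integrable (llr P R) P
  · rw [relEntropy, if_pos ⟨hPR, h_int⟩]
    exact (continuous_coe_real_ereal.tendsto _).comp (tendsto_integral_min_natCast h_int)
  · rw [relEntropy, if_neg fun h ↦ h_int h.2]
    exact EReal.tendsto_coe_nhds_top_iff.2 (tendsto_integral_min_natCast_atTop_of_not_integrable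
      (measurable_llr P R).aestronglyMeasurable (integrable_min_zero_llr hPR) h_int)

lemma integral_sub_log_integral_exp_le_integral_llr [IsProbabilityMeasure P] [SigmaFinite R]
    (hPR : P ≪ R) (h_int : Integrable (llr P R) P) {u : Ω → ℝ} (hu : Integrable u P)
    (hu_exp : Integrable (fun ω ↦ exp (u ω)) R) :
    ∫ ω, u ω ∂P - log (∫ ω, exp (u ω) ∂ R) ≤ ∫ ω, llr P R ω ∂P := by
  have : NeZero R := ⟨fun h ↦ IsProbabilityMeasure.ne_zero P
    (Measure.absolutelyContinuous_zero_iff.1 (h ▸ hPR))⟩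
  have := isProbabilityMeasure_tilted hu_exp
  have h_gibbs := InformationTheory.integral_llr_add_sub_measure_univ_nonneg
    (hPR.trans (absolutelyContinuous_tilted hu_exp))
    (integrable_llr_tilted_right hPR hu h_int hu_exp)
  rw [integral_llr_tilted_right hPR hu hu_exp h_int] at h_gibbs
  simp only [probReal_univ, add_sub_cancel_right] at h_gibbs
  linarith

/-- Clamping the density to `[exp (-c), exp c]`, rather than `llr P R` to `[-c, c]`, gives `-c`
where the density vanishes (there `llr P R` has the junk value `log 0 = 0`); this is what makes
`∫ exp u ∂R ≤ 1 + exp (-c)` hold. -/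
noncomputable def truncatedLlr (P R : Measure Ω) (c : ℝ) (ω : Ω) : ℝ :=
  log (max (exp (-c)) (min (exp c) (P.rnDeriv R ω).toReal))

lemma measurable_truncatedLlr (c : ℝ) : Measurable (truncatedLlr P R c) :=
  (measurable_const.max (measurable_const.min (Measure.measurable_rnDeriv P R).ennreal_toReal)).log

lemma exp_truncatedLlr (c : ℝ) (ω : Ω) :
    exp (truncatedLlr P R c ω) = max (exp (-c)) (min (exp c) (P.rnDeriv R ω).toReal) :=
  exp_log (lt_max_of_lt_left (exp_pos _))

lemma abs_truncatedLlr_le {c : ℝ} (hc : 0 ≤ c) (ω : Ω) : |truncatedLlr P R c ω| ≤ c := by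
  rw [abs_le, ← exp_le_exp, ← exp_le_exp (y := c), exp_truncatedLlr]
  exact ⟨le_max_left _ _, max_le (exp_le_exp.2 (by linarith)) (min_le_left _ _)⟩

lemma min_llr_le_truncatedLlr [SigmaFinite P] [P.HaveLebesgueDecomposition R] (hPR : P ≪ R)
    (c : ℝ) :
    ∀ᵐ ω ∂P, min c (llr P R ω) ≤ truncatedLlr P R c ω := by
  filter_upwards [exp_llr_of_ac P R hPR] with ω h_exp
  rw [← exp_le_exp, exp_truncatedLlr, exp_monotone.map_min, h_exp]
  exact le_max_right _ _

lemma integral_exp_truncatedLlr_le [IsProbabilityMeasure P] [IsProbabilityMeasure R]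
    (hPR : P ≪ R) {c : ℝ} (hc : 0 ≤ c) :
    ∫ ω, exp (truncatedLlr P R c ω) ∂ R ≤ 1 + exp (-c) := by
  calc ∫ ω, exp (truncatedLlr P R c ω) ∂ R
      ≤ ∫ ω, ((P.rnDeriv R ω).toReal + exp (-c)) ∂ R := by
        refine integral_mono (integrable_exp_of_abs_le (measurable_truncatedLlr c)
          (abs_truncatedLlr_le hc)) (Measure.integrable_toReal_rnDeriv.add (integrable_const _))
          fun ω ↦ ?_
        rw [exp_truncatedLlr]
        exact max_le (le_add_of_nonneg_left ENNReal.toReal_nonneg)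
          ((min_le_right _ _).trans (le_add_of_nonneg_right (exp_pos _).le))
    _ = 1 + exp (-c) := by
        rw [integral_add Measure.integrable_toReal_rnDeriv (integrable_const _),
          Measure.integral_toReal_rnDeriv hPR]
        simp

lemma integral_min_llr_sub_log_le [IsProbabilityMeasure P] [IsProbabilityMeasure R]
    (hPR : P ≪ R) {c : ℝ} (hc : 0 ≤ c) :
    ∫ ω, min c (llr P R ω) ∂P - log (1 + exp (-c))
      ≤ ∫ ω, truncatedLlr P R c ω ∂P - log (∫ ω, exp (truncatedLlr P R c ω) ∂ R) := by
  have h_int := integral_mono_ae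
    (integrable_min_of_integrable_min_zero (measurable_llr P R).aestronglyMeasurable
      (integrable_min_zero_llr hPR) hc)
    (integrable_of_abs_le (measurable_truncatedLlr c) (abs_truncatedLlr_le hc))
    (min_llr_le_truncatedLlr hPR c)
  have h_log := log_le_log (integral_exp_pos (integrable_exp_of_abs_le
    (measurable_truncatedLlr c) (abs_truncatedLlr_le hc))) (integral_exp_truncatedLlr_le hPR hc)
  linarith

lemma tendsto_integral_min_llr_sub_log [IsFiniteMeasure P] [IsFiniteMeasure R] (hPR : P ≪ R) :
    Tendsto (fun n : ℕ ↦
      ((∫ ω, min (n : ℝ) (llr P R ω) ∂P - log (1 + exp (-n)) : ℝ) : EReal)) atTop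
      (𝓝 (relEntropy P R)) := by
  have h_log : Tendsto (fun n : ℕ ↦ -log (1 + exp (-n))) atTop (𝓝 0) := by
    have h_exp := (tendsto_exp_neg_atTop_nhds_zero.comp tendsto_natCast_atTop_atTop).const_add 1
    simpa using ((continuousAt_log one_ne_zero).tendsto.comp (by simpa using h_exp)).neg
  have h_sum := (EReal.continuousAt_add (Or.inr EReal.zero_ne_bot)
    (Or.inr EReal.zero_ne_top)).tendsto.comp ((tendsto_integral_min_llr hPR).prodMk_nhds
      ((continuous_coe_real_ereal.tendsto 0).comp h_log))
  rw [EReal.coe_zero, add_zero] at h_sum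
  refine h_sum.congr fun n ↦ ?_
  simp [sub_eq_add_neg]

end RelEntropy

/-- The supremum over all bounded measurable `u : Ω → ℝ` of
`∫ u dP − log ∫ e^u dR` equals the relative entropy `H(P|R)`. -/
theorem sup_bounded_measurable_eq_relEntropy {Ω : Type*} [MeasurableSpace Ω]
    (P R : Measure Ω) [IsProbabilityMeasure P] [IsProbabilityMeasure R] (hPR : P ≪ R) :
    sSup {x : EReal | ∃ u : Ω → ℝ, Measurable u ∧ (∃ C : ℝ, ∀ ω, |u ω| ≤ C) ∧
        x = ((∫ ω, u ω ∂P - Real.log (∫ ω, Real.exp (u ω) ∂ R) : ℝ) : EReal)} =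
      relEntropy P R := by
  refine le_antisymm (sSup_le ?_) (le_of_tendsto' (tendsto_integral_min_llr_sub_log hPR) ?_)
  · rintro _ ⟨u, hu, ⟨C, hC⟩, rfl⟩
    by_cases h_int : Integrable (llr P R) P
    · rw [relEntropy, if_pos ⟨hPR, h_int⟩, EReal.coe_le_coe_iff]
      exact integral_sub_log_integral_exp_le_integral_llr hPR h_int
        (integrable_of_abs_le hu hC) (integrable_exp_of_abs_le hu hC)
    · rw [relEntropy, if_neg fun h ↦ h_int h.2]
      exact le_top
  · intro n
    refine le_sSup_of_le ⟨truncatedLlr P R n, measurable_truncatedLlr n,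
      ⟨n, abs_truncatedLlr_le n.cast_nonneg⟩, rfl⟩ ?_
    exact EReal.coe_le_coe_iff.2 (integral_min_llr_sub_log_le hPR n.cast_nonneg)
end

section
/- Let R be a probability measure on a measurable space Ω and let P be a finite signed measure on Ω which is NOT a probability measure absolutely continuous with respect to R (i.e., either the negative part of P is nonzero, or P is a nonnegative measure of total mass different from 1, or P is a probability measure that is not absolutely continuous with respect to R). Then the supremum, over all bounded measurable functions u : Ω → ℝ, of ∫ u dP − log ∫ e^u dR equals +∞. -/
/-!
Each of the three ways in which `P = μ - ν` can fail to be a probability measure absolutely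
continuous with respect to `R` yields a one-parameter family of bounded measurable test
functions along which the Donsker–Varadhan functional grows linearly in `t ≥ 0`:
`-t · 1_s` on a `μ`-null set `s` charged by `ν`, the constant `t (μ(Ω) - ν(Ω) - 1)`,
and `t · 1_A` on a set `A` that is null for `R` and `ν` but charged by `μ`.
-/

open MeasureTheory Real Filter Classical
open scoped ENNReal

namespace MeasureTheory

variable {Ω : Type*} [MeasurableSpace Ω]

/-- The Donsker–Varadhan functional of the signed measure `μ - ν` relative to `R`. -/
noncomputable def donskerVaradhan (μ ν R : Measure Ω) (u : Ω → ℝ) : ℝ :=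
  ∫ ω, u ω ∂μ - ∫ ω, u ω ∂ν - Real.log (∫ ω, Real.exp (u ω) ∂ R)

def donskerVaradhanValues (μ ν R : Measure Ω) : Set EReal :=
  {x | ∃ u : Ω → ℝ, Measurable u ∧ (∃ C : ℝ, ∀ ω, |u ω| ≤ C) ∧
    x = (donskerVaradhan μ ν R u : EReal)}

variable {μ ν R : Measure Ω}

theorem sSup_donskerVaradhanValues_eq_top_of_linear_growth (u : ℝ → Ω → ℝ)
    (hmeas : ∀ t, Measurable (u t)) (hbdd : ∀ t, ∃ C : ℝ, ∀ ω, |u t ω| ≤ C)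
    {a : ℝ} (ha : 0 < a) (hgrowth : ∀ t, 0 ≤ t → a * t ≤ donskerVaradhan μ ν R (u t)) :
    sSup (donskerVaradhanValues μ ν R) = ⊤ := by
  refine sSup_eq_top.2 fun b hb => ?_
  obtain ⟨r, hbr, -⟩ := EReal.exists_between_coe_real hb
  have ht : 0 ≤ max r 0 / a := div_nonneg (le_max_right r 0) ha.le
  have hr : r ≤ donskerVaradhan μ ν R (u (max r 0 / a)) := calc
    r ≤ a * (max r 0 / a) := by rw [mul_div_cancel₀ _ ha.ne']; exact le_max_left r 0
    _ ≤ _ := hgrowth _ ht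
  exact ⟨_, ⟨u _, hmeas _, hbdd _, rfl⟩, hbr.trans_le (EReal.coe_le_coe_iff.2 hr)⟩

theorem log_integral_exp_nonpos [IsProbabilityMeasure R] {u : Ω → ℝ} (hu : Measurable u)
    (hu0 : ∀ ω, u ω ≤ 0) : Real.log (∫ ω, Real.exp (u ω) ∂ R) ≤ 0 := by
  have hle : ∀ ω, Real.exp (u ω) ≤ 1 := fun ω => Real.exp_le_one_iff.2 (hu0 ω)
  have hint : Integrable (fun ω => Real.exp (u ω)) R :=
    (integrable_const (1 : ℝ)).mono' hu.exp.aestronglyMeasurable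
      (ae_of_all _ fun ω => by simpa [abs_of_nonneg (Real.exp_nonneg _)] using hle ω)
  refine Real.log_nonpos (integral_nonneg fun ω => (Real.exp_nonneg _)) ?_
  calc ∫ ω, Real.exp (u ω) ∂ R ≤ ∫ _, (1 : ℝ) ∂ R :=
        integral_mono hint (integrable_const 1) hle
    _ = 1 := by simp

theorem sSup_donskerVaradhanValues_eq_top_of_not_absolutelyContinuous
    [IsProbabilityMeasure R] [IsFiniteMeasure ν] (h : ¬ ν ≪ μ) :
    sSup (donskerVaradhanValues μ ν R) = ⊤ := by
  obtain ⟨s, hs, hμs, hνs⟩ : ∃ s, MeasurableSet s ∧ μ s = 0 ∧ ν s ≠ 0 := by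
    by_contra! hnot
    exact h (Measure.AbsolutelyContinuous.mk hnot)
  have hνs_pos : 0 < ν.real s := ENNReal.toReal_pos hνs (measure_ne_top ν s)
  refine sSup_donskerVaradhanValues_eq_top_of_linear_growth (fun t => s.indicator fun _ => -t)
    (fun t => measurable_const.indicator hs)
    (fun t => ⟨|-t|, norm_indicator_le_norm_self (fun _ => -t)⟩) hνs_pos fun t ht => ?_
  have hlog := log_integral_exp_nonpos (R := R) (measurable_const.indicator hs)
    (fun ω => Set.indicator_nonpos (fun _ _ => neg_nonpos.2 ht) ω)
  have hμ : ∫ ω, s.indicator (fun _ => -t) ω ∂μ = 0 := by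
    simp [integral_indicator_const _ hs, measureReal_def, hμs]
  have hν : ∫ ω, s.indicator (fun _ => -t) ω ∂ν = -(ν.real s * t) := by
    simp [integral_indicator_const _ hs]
  rw [donskerVaradhan, hμ, hν]
  linarith

theorem sSup_donskerVaradhanValues_eq_top_of_measureReal_univ_sub_ne_one
    [IsProbabilityMeasure R] (h : μ.real Set.univ - ν.real Set.univ ≠ 1) :
    sSup (donskerVaradhanValues μ ν R) = ⊤ := by
  set c := μ.real Set.univ - ν.real Set.univ - 1
  have hc : 0 < c ^ 2 := sq_pos_of_ne_zero (sub_ne_zero.2 h)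
  refine sSup_donskerVaradhanValues_eq_top_of_linear_growth (fun t _ => t * c)
    (fun t => measurable_const) (fun t => ⟨_, fun _ => le_rfl⟩) hc fun t _ => le_of_eq ?_
  simp only [donskerVaradhan, integral_const, smul_eq_mul, probReal_univ, one_mul,
    Real.log_exp]
  ring

theorem sSup_donskerVaradhanValues_eq_top_of_not_absolutelyContinuous_add
    [IsProbabilityMeasure R] [IsFiniteMeasure μ] (h : ¬ μ ≪ R + ν) :
    sSup (donskerVaradhanValues μ ν R) = ⊤ := by
  obtain ⟨A, hA, hRνA, hμA⟩ : ∃ A, MeasurableSet A ∧ (R + ν) A = 0 ∧ μ A ≠ 0 := by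
    by_contra! hnot
    exact h (Measure.AbsolutelyContinuous.mk hnot)
  obtain ⟨hRA, hνA⟩ : R A = 0 ∧ ν A = 0 := by simpa using hRνA
  have hμA_pos : 0 < μ.real A := ENNReal.toReal_pos hμA (measure_ne_top μ A)
  refine sSup_donskerVaradhanValues_eq_top_of_linear_growth (fun t => A.indicator fun _ => t)
    (fun t => measurable_const.indicator hA)
    (fun t => ⟨|t|, norm_indicator_le_norm_self (fun _ => t)⟩) hμA_pos fun t _ => le_of_eq ?_
  have hexp : (fun ω => Real.exp (A.indicator (fun _ => t) ω)) =ᵐ[R] fun _ => 1 := by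
    filter_upwards [measure_eq_zero_iff_ae_notMem.1 hRA] with ω hω
    simp [hω]
  have hμ : ∫ ω, A.indicator (fun _ => t) ω ∂μ = μ.real A * t := by
    simp [integral_indicator_const _ hA]
  have hν : ∫ ω, A.indicator (fun _ => t) ω ∂ν = 0 := by
    simp [integral_indicator_const _ hA, measureReal_def, hνA]
  rw [donskerVaradhan, hμ, hν, integral_congr_ae hexp]
  simp

end MeasureTheory

/-- For a finite signed measure `P` (with Jordan decomposition `P = P⁺ − P⁻`) and a
bounded measurable `u`, the signed integral `∫ u dP` is `∫ u dP⁺ − ∫ u dP⁻`.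
If `P` is not a probability measure absolutely continuous with respect to the
probability measure `R` — that is, either its negative part `P⁻` is nonzero, or `P` is a
nonnegative measure (`P⁻ = 0`) of total mass different from `1`, or `P` is a probability
measure (`P⁻ = 0` and `P⁺(Ω) = 1`) which is not absolutely continuous with respect
to `R` — then the supremum over all bounded measurable `u : Ω → ℝ` of
`∫ u dP − log ∫ e^u dR` is `+∞`. -/
theorem sup_bounded_measurable_eq_top_of_not_prob_ac {Ω : Type*} [MeasurableSpace Ω]
    (R : Measure Ω) [IsProbabilityMeasure R] (P : SignedMeasure Ω)
    (h : P.toJordanDecomposition.negPart ≠ 0 ∨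
        (P.toJordanDecomposition.negPart = 0 ∧
          P.toJordanDecomposition.posPart Set.univ ≠ 1) ∨
        (P.toJordanDecomposition.negPart = 0 ∧
          P.toJordanDecomposition.posPart Set.univ = 1 ∧
          ¬ P.toJordanDecomposition.posPart ≪ R)) :
    sSup {x : EReal | ∃ u : Ω → ℝ, Measurable u ∧ (∃ C : ℝ, ∀ ω, |u ω| ≤ C) ∧
        x = ((∫ ω, u ω ∂P.toJordanDecomposition.posPart
              - ∫ ω, u ω ∂P.toJordanDecomposition.negPart
              - Real.log (MeasureTheory.integral R (fun ω => Real.exp (u ω))) : ℝ) : EReal)} = ⊤ := by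
  set μ := P.toJordanDecomposition.posPart
  set ν := P.toJordanDecomposition.negPart
  change sSup (donskerVaradhanValues μ ν R) = ⊤
  rcases h with hν | ⟨hν, hμ⟩ | ⟨hν, -, hμR⟩
  · refine sSup_donskerVaradhanValues_eq_top_of_not_absolutelyContinuous fun hνμ => hν ?_
    exact Measure.eq_zero_of_absolutelyContinuous_of_mutuallySingular hνμ
      P.toJordanDecomposition.mutuallySingular.symm
  · refine sSup_donskerVaradhanValues_eq_top_of_measureReal_univ_sub_ne_one ?_
    rw [hν, measureReal_zero_apply, sub_zero, measureReal_def]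
    exact fun h1 => hμ ((ENNReal.toReal_eq_one_iff _).1 h1)
  · refine sSup_donskerVaradhanValues_eq_top_of_not_absolutelyContinuous_add ?_
    rwa [hν, add_zero]
end

section
/- Let R be a probability measure on a measurable space Ω and let P be a probability measure on Ω with P ≪ R and H(P|R) < ∞. Then H(P|R) = sup { ∫ u dP − log ∫ e^u dR : u : Ω → [−∞, ∞) measurable with ∫ e^u dR < ∞ }, where the convention e^{−∞} = 0 is used and ∫ u dP ∈ [−∞, ∞) is the integral of an extended-real valued function. -/
open MeasureTheory Real Filter Classical
open scoped ENNReal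

/-- The nonnegative part of an extended real number, valued in `ℝ≥0∞`
(`⊥ ↦ 0`, `⊤ ↦ ∞`, `x ↦ max x 0`). -/
noncomputable def erealPosPart : EReal → ℝ≥0∞
  | ⊥ => 0
  | ⊤ => ⊤
  | (x : ℝ) => ENNReal.ofReal x

/-- For a `[−∞,∞)`-valued function `u`, the integral `∫ u dP ∈ [−∞,∞]` encoded in
`EReal` as `∫⁻ u⁺ dP − ∫⁻ u⁻ dP`. -/
noncomputable def erealIntegral {Ω : Type*} [MeasurableSpace Ω] (P : Measure Ω)
    (u : Ω → EReal) : EReal :=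
  ((∫⁻ ω, erealPosPart (u ω) ∂P : ℝ≥0∞) : EReal)
    - ((∫⁻ ω, erealPosPart (-(u ω)) ∂P : ℝ≥0∞) : EReal)

/-! The supremum is attained at `u = log (dP/dR)`, for which `∫ e^u dR = 1` and
`∫ u dP = H(P|R)`. Conversely, let `u` be admissible with `∫ u⁻ dP < ∞` (otherwise
`∫ u dP = -∞`). Since `e^{-log (dP/dR)} dP ≤ dR`, the function `g = u - log (dP/dR)` satisfies
`∫ e^g dP ≤ ∫ e^u dR`; this makes `g`, hence `u`, `P`-integrable, and Jensen's inequality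
`∫ g dP ≤ log ∫ e^g dP` gives `∫ u dP - log ∫ e^u dR ≤ H(P|R)`. -/

lemma erealPosPart_eq_toENNReal : erealPosPart = EReal.toENNReal := by
  funext x
  induction x using EReal.rec
  · exact EReal.toENNReal_bot.symm
  · rfl
  · rfl

lemma measurable_erealPosPart : Measurable erealPosPart :=
  erealPosPart_eq_toENNReal ▸ measurable_ereal_toENNReal

lemma neg_toReal_erealPosPart_neg_le (x : EReal) : -(erealPosPart (-x)).toReal ≤ x.toReal := by
  induction x using EReal.rec with
  | bot => simp [erealPosPart_eq_toENNReal]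
  | coe x =>
    rw [← EReal.coe_neg, erealPosPart_eq_toENNReal, EReal.real_coe_toENNReal,
      ENNReal.toReal_ofReal', EReal.toReal_coe]
    exact neg_le.1 (le_max_left _ _)
  | top => simp [erealPosPart_eq_toENNReal]

section ERealIntegral

variable {Ω : Type*} [MeasurableSpace Ω] {P : Measure Ω}

lemma erealIntegral_congr_ae {u u' : Ω → EReal} (h : u =ᵐ[P] u') :
    erealIntegral P u = erealIntegral P u' := by
  unfold erealIntegral
  congr 2 <;> exact lintegral_congr_ae (h.mono fun ω hω => by simp only [hω])

lemma erealIntegral_coe {v : Ω → ℝ} (hv : Integrable v P) :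
    erealIntegral P (fun ω => (v ω : EReal)) = ((∫ ω, v ω ∂P : ℝ) : EReal) := by
  have hneg : ∫⁻ ω, ENNReal.ofReal (-v ω) ∂P ≠ ∞ := hv.neg.lintegral_lt_top.ne
  simp only [erealIntegral, erealPosPart_eq_toENNReal, ← EReal.coe_neg,
    EReal.real_coe_toENNReal]
  rw [← EReal.coe_ennreal_toReal hv.lintegral_lt_top.ne, ← EReal.coe_ennreal_toReal hneg,
    ← EReal.coe_sub, integral_eq_lintegral_pos_part_sub_lintegral_neg_part hv]

lemma erealIntegral_eq_bot {u : Ω → EReal} (h : ∫⁻ ω, erealPosPart (-u ω) ∂P = ∞) :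
    erealIntegral P u = ⊥ := by
  rw [erealIntegral, h, EReal.coe_ennreal_top, EReal.sub_top]

lemma ae_ne_bot_of_lintegral_erealPosPart_neg_ne_top {u : Ω → EReal} (hu : Measurable u)
    (h : ∫⁻ ω, erealPosPart (-u ω) ∂P ≠ ∞) : ∀ᵐ ω ∂P, u ω ≠ ⊥ := by
  filter_upwards [ae_lt_top (measurable_erealPosPart.comp hu.neg) h] with ω hω hbot
  simp [hbot, erealPosPart_eq_toENNReal] at hω

lemma ae_ne_top_of_lintegral_exp_ne_top {u : Ω → EReal} (hu : Measurable u)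
    (h : ∫⁻ ω, (u ω).exp ∂P ≠ ∞) : ∀ᵐ ω ∂P, u ω ≠ ⊤ := by
  filter_upwards [ae_lt_top hu.ereal_exp h] with ω hω htop
  simp [htop] at hω

end ERealIntegral

section RealAnalysis

variable {α : Type*} [MeasurableSpace α] {μ : Measure α}

lemma integrable_of_integrable_exp_of_le {g h : α → ℝ}
    (hexp : Integrable (fun x => exp (g x)) μ) (hh : Integrable h μ) (hhg : ∀ᵐ x ∂μ, h x ≤ g x) :
    Integrable g μ := by
  refine (hexp.add hh.abs).mono'
    (aemeasurable_of_aemeasurable_exp hexp.1.aemeasurable).aestronglyMeasurable ?_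
  filter_upwards [hhg] with x hx
  rw [Real.norm_eq_abs, abs_le, Pi.add_apply]
  constructor <;> linarith [add_one_le_exp (g x), exp_pos (g x), neg_abs_le (h x), abs_nonneg (h x)]

lemma integral_le_log_integral_exp [IsProbabilityMeasure μ] {g : α → ℝ} (hg : Integrable g μ)
    (hexp : Integrable (fun x => exp (g x)) μ) : ∫ x, g x ∂μ ≤ log (∫ x, exp (g x) ∂μ) :=
  (le_log_iff_exp_le (integral_exp_pos hexp)).2 <|
    convexOn_exp.map_integral_le continuous_exp.continuousOn isClosed_univ
      (ae_of_all _ fun _ => Set.mem_univ _) hg hexp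

end RealAnalysis

section RelativeEntropy

variable {Ω : Type*} [MeasurableSpace Ω] {P R : Measure Ω}

lemma lintegral_exp_neg_llr_mul_le [SigmaFinite P] [SigmaFinite R] (hPR : P ≪ R)
    {f : Ω → ℝ≥0∞} (hf : Measurable f) :
    ∫⁻ ω, ENNReal.ofReal (exp (-llr P R ω)) * f ω ∂P ≤ ∫⁻ ω, f ω ∂ R :=
  calc ∫⁻ ω, ENNReal.ofReal (exp (-llr P R ω)) * f ω ∂P
      = ∫⁻ ω, R.rnDeriv P ω * f ω ∂P := by
        refine lintegral_congr_ae ?_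
        filter_upwards [exp_neg_llr hPR, Measure.rnDeriv_lt_top R P] with ω hexp hfin
        rw [hexp, ENNReal.ofReal_toReal hfin.ne]
    _ = ∫⁻ ω, f ω ∂(P.withDensity (R.rnDeriv P)) :=
        (lintegral_withDensity_eq_lintegral_mul _ (Measure.measurable_rnDeriv R P) hf).symm
    _ ≤ ∫⁻ ω, f ω ∂ R := lintegral_mono' (Measure.withDensity_rnDeriv_le R P) le_rfl

/-- `log (dP/dR)` with values in `[-∞, ∞)`: `toNNReal` sends the value `∞` of the density
(taken only on an `R`-null set) to `0`. -/
noncomputable def logRNDeriv (P R : Measure Ω) (ω : Ω) : EReal :=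
  ENNReal.log ((P.rnDeriv R ω).toNNReal : ℝ≥0∞)

lemma measurable_logRNDeriv (P R : Measure Ω) : Measurable (logRNDeriv P R) :=
  (Measure.measurable_rnDeriv P R).ennreal_toNNReal.coe_nnreal_ennreal.ennreal_log

lemma logRNDeriv_ne_top (P R : Measure Ω) (ω : Ω) : logRNDeriv P R ω ≠ ⊤ := by
  simp [logRNDeriv, ENNReal.log_eq_top_iff]

lemma lintegral_exp_logRNDeriv [SigmaFinite P] [P.HaveLebesgueDecomposition R] (hPR : P ≪ R) :
    ∫⁻ ω, (logRNDeriv P R ω).exp ∂ R = P Set.univ := by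
  rw [← Measure.lintegral_rnDeriv hPR]
  refine lintegral_congr_ae ?_
  filter_upwards [Measure.rnDeriv_lt_top P R] with ω hω
  rw [logRNDeriv, ENNReal.exp_log, ENNReal.coe_toNNReal hω.ne]

lemma logRNDeriv_ae_eq_llr [SigmaFinite P] [SigmaFinite R] (hPR : P ≪ R) :
    logRNDeriv P R =ᵐ[P] fun ω => (llr P R ω : EReal) := by
  filter_upwards [Measure.rnDeriv_pos hPR, hPR.ae_le (Measure.rnDeriv_lt_top P R)] with ω hpos hfin
  rw [logRNDeriv, ENNReal.coe_toNNReal hfin.ne,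
    ENNReal.log_pos_real' (ENNReal.toReal_pos hpos.ne' hfin.ne)]
  rfl

lemma erealIntegral_sub_log_lintegral_exp_le [IsProbabilityMeasure P] [SigmaFinite R]
    (hPR : P ≪ R) (hint : Integrable (llr P R) P) {u : Ω → EReal} (hu : Measurable u)
    (hZ : ∫⁻ ω, (u ω).exp ∂ R < ∞) :
    erealIntegral P u - ENNReal.log (∫⁻ ω, (u ω).exp ∂ R) ≤ ((∫ ω, llr P R ω ∂P : ℝ) : EReal) := by
  by_cases hneg : ∫⁻ ω, erealPosPart (-u ω) ∂P = ∞
  · rw [erealIntegral_eq_bot hneg, EReal.bot_sub]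
    exact bot_le
  set v : Ω → ℝ := fun ω => (u ω).toReal
  have huv : u =ᵐ[P] fun ω => (v ω : EReal) := by
    filter_upwards [hPR.ae_le (ae_ne_top_of_lintegral_exp_ne_top hu hZ.ne),
      ae_ne_bot_of_lintegral_erealPosPart_neg_ne_top hu hneg] with ω htop hbot
    exact (EReal.coe_toReal htop hbot).symm
  set g : Ω → ℝ := fun ω => v ω - llr P R ω
  have hW : ∫⁻ ω, ENNReal.ofReal (exp (g ω)) ∂P ≤ ∫⁻ ω, (u ω).exp ∂ R := by
    refine le_of_eq_of_le (lintegral_congr_ae ?_) (lintegral_exp_neg_llr_mul_le hPR hu.ereal_exp)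
    filter_upwards [huv] with ω hω
    rw [hω, EReal.exp_coe, ← ENNReal.ofReal_mul (exp_pos _).le, ← exp_add, neg_add_eq_sub]
  have hexp : Integrable (fun ω => exp (g ω)) P :=
    (lintegral_ofReal_ne_top_iff_integrable
      (hu.ereal_toReal.sub (measurable_llr P R)).exp.aestronglyMeasurable
      (ae_of_all _ fun ω => (exp_pos _).le)).1 (hW.trans_lt hZ).ne
  have hneg_int : Integrable (fun ω => (erealPosPart (-u ω)).toReal) P :=
    integrable_toReal_of_lintegral_ne_top (measurable_erealPosPart.comp hu.neg).aemeasurable hneg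
  have hg : Integrable g P :=
    integrable_of_integrable_exp_of_le hexp (hneg_int.neg.sub hint)
      (ae_of_all _ fun ω => sub_le_sub_right (neg_toReal_erealPosPart_neg_le (u ω)) _)
  have hv : Integrable v P := (hg.add hint).congr (ae_of_all _ fun ω => sub_add_cancel (v ω) _)
  have hlog : ((∫ ω, g ω ∂P : ℝ) : EReal) ≤ ENNReal.log (∫⁻ ω, (u ω).exp ∂ R) := by
    refine (EReal.coe_le_coe_iff.2 (integral_le_log_integral_exp hg hexp)).trans ?_
    rw [← ENNReal.log_ofReal_of_pos (integral_exp_pos hexp), ofReal_integral_eq_lintegral_ofReal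
      hexp (ae_of_all _ fun ω => (exp_pos _).le)]
    exact ENNReal.log_le_log hW
  have hgv : ∫ ω, v ω ∂P = ∫ ω, g ω ∂P + ∫ ω, llr P R ω ∂P := by
    rw [← integral_add hg hint]
    simp [g]
  rw [erealIntegral_congr_ae huv, erealIntegral_coe hv, hgv,
    EReal.sub_le_iff_le_add (.inr (EReal.coe_ne_top _)) (.inr (EReal.coe_ne_bot _)),
    EReal.coe_add, add_comm]
  exact add_le_add_right hlog _

lemma relEntropy_lt_top_iff :
    relEntropy P R < ⊤ ↔ P ≪ R ∧ Integrable (llr P R) P := by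
  unfold relEntropy
  split_ifs with h <;> simp [h]

end RelativeEntropy

theorem relEntropy_eq_sup_ereal_valued_general {Ω : Type*} [MeasurableSpace Ω]
    (P R : Measure Ω) [IsProbabilityMeasure P] [IsProbabilityMeasure R]
    (hH : relEntropy P R < ⊤) :
    relEntropy P R =
      sSup {x : EReal | ∃ u : Ω → EReal, Measurable u ∧ (∀ ω, u ω ≠ ⊤) ∧
        (lintegral R (fun ω => EReal.exp (u ω))) < ⊤ ∧
        x = erealIntegral P u - ENNReal.log (lintegral R (fun ω => EReal.exp (u ω)))} := by
  obtain ⟨hPR, hint⟩ := relEntropy_lt_top_iff.1 hH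
  have hZ : ∫⁻ ω, (logRNDeriv P R ω).exp ∂ R = 1 := by
    rw [lintegral_exp_logRNDeriv hPR, measure_univ]
  rw [relEntropy, if_pos ⟨hPR, hint⟩]
  refine le_antisymm (le_sSup ⟨logRNDeriv P R, measurable_logRNDeriv P R,
    logRNDeriv_ne_top P R, hZ ▸ ENNReal.one_lt_top, ?_⟩) (sSup_le ?_)
  · rw [hZ, ENNReal.log_one, sub_zero, erealIntegral_congr_ae (logRNDeriv_ae_eq_llr hPR),
      erealIntegral_coe hint]
  · rintro x ⟨u, hu, -, hZu, rfl⟩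
    exact erealIntegral_sub_log_lintegral_exp_le hPR hint hu hZu

/-- For `P ≪ R` with `H(P|R) < ∞`,
`H(P|R) = sup { ∫ u dP − log ∫ e^u dR : u : Ω → [−∞,∞) measurable, ∫ e^u dR < ∞ }`,
where `e^{−∞} = 0` (via `EReal.exp`) and `∫ u dP ∈ [−∞,∞)` is the integral of the
extended-real valued function `u`. -/
theorem relEntropy_eq_sup_ereal_valued {Ω : Type*} [MeasurableSpace Ω]
    (P R : Measure Ω) [IsProbabilityMeasure P] [IsProbabilityMeasure R] (hPR : P ≪ R)
    (hH : relEntropy P R < ⊤) :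
    relEntropy P R =
      sSup {x : EReal | ∃ u : Ω → EReal, Measurable u ∧ (∀ ω, u ω ≠ ⊤) ∧
        (lintegral R (fun ω => EReal.exp (u ω))) < ⊤ ∧
        x = erealIntegral P u - ENNReal.log (lintegral R (fun ω => EReal.exp (u ω)))} :=
  relEntropy_eq_sup_ereal_valued_general P R hH
end

section
/- Let R be a probability measure on a measurable space Ω and let P be a probability measure on Ω with P ≪ R. Then H(P|R) = sup { ∫ u dP − ∫ (e^u − 1) dR : u : Ω → ℝ measurable, inf u > −∞ and ∫ e^u dR < ∞ } ∈ [0, ∞]. -/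
open MeasureTheory Real Filter Classical
open scoped ENNReal

/-!
For admissible `u`, integrating `u ≤ llr + (e^{u - llr} - 1)` against `P` and changing measure,
`∫ e^{u - llr} dP ≤ ∫ e^u dR`, bounds its term by `H(P|R)`. Conversely `u = log (dP/dR + ε)`
is admissible, dominates `llr` `P`-a.e. and has `∫ (e^u - 1) dR = ε`, so its term is at least
`H(P|R) - ε`.
-/

lemma EReal.le_of_forall_pos_le_add {x y : EReal} (h : ∀ ε : ℝ, 0 < ε → x ≤ y + ε) : x ≤ y := by
  induction y with
  | bot => simpa using h 1 one_pos
  | top => exact le_top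
  | coe y =>
    induction x with
    | bot => exact bot_le
    | top =>
      have h1 := h 1 one_pos
      rw [top_le_iff, ← EReal.coe_add] at h1
      exact absurd h1 (EReal.coe_ne_top _)
    | coe x =>
      exact EReal.coe_le_coe_iff.2 <| _root_.le_of_forall_pos_le_add fun ε hε =>
        EReal.coe_le_coe_iff.1 (h ε hε)

lemma Real.enorm_le_ofReal_add_ofReal_neg (x : ℝ) :
    ‖x‖ₑ ≤ ENNReal.ofReal x + ENNReal.ofReal (-x) := by
  rcases le_total 0 x with h | h
  · simp [Real.enorm_eq_ofReal h]
  · simp [Real.enorm_eq_ofReal_abs, abs_of_nonpos h]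

section IntegralEReal

variable {Ω : Type*} [MeasurableSpace Ω] {μ : Measure Ω} {f g : Ω → ℝ}

/-- This is `⊤ - ⊤ = ⊥` when both parts are infinite. -/
noncomputable def integralEReal (μ : Measure Ω) (f : Ω → ℝ) : EReal :=
  ((∫⁻ ω, ENNReal.ofReal (f ω) ∂μ : ℝ≥0∞) : EReal)
    - ((∫⁻ ω, ENNReal.ofReal (-(f ω)) ∂μ : ℝ≥0∞) : EReal)

lemma integralEReal_mono_ae (h : f ≤ᵐ[μ] g) : integralEReal μ f ≤ integralEReal μ g :=
  EReal.sub_le_sub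
    (EReal.coe_ennreal_le_coe_ennreal_iff.2 <| lintegral_mono_ae <|
      h.mono fun _ hω => ENNReal.ofReal_le_ofReal hω)
    (EReal.coe_ennreal_le_coe_ennreal_iff.2 <| lintegral_mono_ae <|
      h.mono fun _ hω => ENNReal.ofReal_le_ofReal (neg_le_neg hω))

lemma integralEReal_eq_integral (hf : Integrable f μ) : integralEReal μ f = ∫ ω, f ω ∂μ := by
  have hpos : ∫⁻ ω, ENNReal.ofReal (f ω) ∂μ ≠ ∞ :=
    ((lintegral_mono fun ω => Real.ofReal_le_enorm (f ω)).trans_lt hf.2).ne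
  have hneg : ∫⁻ ω, ENNReal.ofReal (-f ω) ∂μ ≠ ∞ :=
    ((lintegral_mono fun ω => Real.ofReal_le_enorm (-f ω)).trans_lt hf.neg.2).ne
  rw [integralEReal, integral_eq_lintegral_pos_part_sub_lintegral_neg_part hf,
    ← ENNReal.ofReal_toReal hpos, ← ENNReal.ofReal_toReal hneg]
  simp [EReal.coe_ennreal_ofReal, EReal.coe_sub]

lemma integralEReal_eq_top (hfm : AEStronglyMeasurable f μ) (hf : ¬ Integrable f μ)
    (hneg : ∫⁻ ω, ENNReal.ofReal (-f ω) ∂μ ≠ ∞) : integralEReal μ f = ⊤ := by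
  have hpos : ∫⁻ ω, ENNReal.ofReal (f ω) ∂μ = ∞ := by
    by_contra hpos
    refine hf ⟨hfm, ?_⟩
    calc ∫⁻ ω, ‖f ω‖ₑ ∂μ
        ≤ ∫⁻ ω, ENNReal.ofReal (f ω) + ENNReal.ofReal (-f ω) ∂μ :=
          lintegral_mono fun ω => Real.enorm_le_ofReal_add_ofReal_neg (f ω)
      _ = (∫⁻ ω, ENNReal.ofReal (f ω) ∂μ) + ∫⁻ ω, ENNReal.ofReal (-f ω) ∂μ :=
          lintegral_add_left' hfm.aemeasurable.ennreal_ofReal _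
      _ < ∞ := ENNReal.add_lt_top.2 ⟨Ne.lt_top hpos, Ne.lt_top hneg⟩
  rw [integralEReal, hpos, EReal.coe_ennreal_top, ← ENNReal.ofReal_toReal hneg,
    EReal.coe_ennreal_ofReal, EReal.top_sub_coe]

end IntegralEReal

section LogLikelihoodRatio

variable {Ω : Type*} [MeasurableSpace Ω] {P R : Measure Ω} {u : Ω → ℝ}

lemma lintegral_exp_sub_llr_le [SigmaFinite P] [SigmaFinite R] (hPR : P ≪ R)
    (hu : Measurable u) :
    ∫⁻ ω, ENNReal.ofReal (exp (u ω - llr P R ω)) ∂P ≤ ∫⁻ ω, ENNReal.ofReal (exp (u ω)) ∂ R := by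
  have hae : (fun ω => ENNReal.ofReal (exp (u ω - llr P R ω)))
      =ᵐ[P] fun ω => R.rnDeriv P ω * ENNReal.ofReal (exp (u ω)) := by
    filter_upwards [exp_neg_llr hPR, Measure.rnDeriv_lt_top R P] with ω hexp hlt
    rw [sub_eq_add_neg, exp_add, hexp, ENNReal.ofReal_mul (exp_pos _).le,
      ENNReal.ofReal_toReal hlt.ne, mul_comm]
  calc ∫⁻ ω, ENNReal.ofReal (exp (u ω - llr P R ω)) ∂P
      = ∫⁻ ω, ENNReal.ofReal (exp (u ω)) ∂P.withDensity (R.rnDeriv P) := by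
        rw [lintegral_congr_ae hae, lintegral_withDensity_eq_lintegral_mul _
          (Measure.measurable_rnDeriv R P) (by fun_prop)]
        rfl
    _ ≤ ∫⁻ ω, ENNReal.ofReal (exp (u ω)) ∂ R :=
        lintegral_mono' (Measure.withDensity_rnDeriv_le R P) le_rfl

lemma lintegral_ofReal_neg_llr_ne_top [SigmaFinite P] [IsFiniteMeasure R] (hPR : P ≪ R) :
    ∫⁻ ω, ENNReal.ofReal (-llr P R ω) ∂P ≠ ∞ := by
  have h := lintegral_exp_sub_llr_le hPR (u := fun _ => 0) measurable_const
  simp only [zero_sub, exp_zero, ENNReal.ofReal_one, lintegral_one] at h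
  refine ((lintegral_mono fun ω => ?_).trans h).trans_lt (measure_lt_top R _) |>.ne
  exact ENNReal.ofReal_le_ofReal ((le_add_of_nonneg_right zero_le_one).trans (add_one_le_exp _))

lemma relEntropy_eq_integralEReal_llr [SigmaFinite P] [IsFiniteMeasure R] (hPR : P ≪ R) :
    relEntropy P R = integralEReal P (llr P R) := by
  by_cases h : Integrable (llr P R) P
  · rw [relEntropy, if_pos ⟨hPR, h⟩, integralEReal_eq_integral h]
  · rw [relEntropy, if_neg fun h' => h h'.2, integralEReal_eq_top
      (measurable_llr P R).aestronglyMeasurable h (lintegral_ofReal_neg_llr_ne_top hPR)]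

lemma integrable_exp_sub_llr [SigmaFinite P] [SigmaFinite R] (hPR : P ≪ R) (hu : Measurable u)
    (hexp : Integrable (fun ω => exp (u ω)) R) :
    Integrable (fun ω => exp (u ω - llr P R ω)) P := by
  refine (lintegral_ofReal_ne_top_iff_integrable (by fun_prop)
    (ae_of_all _ fun _ => (exp_pos _).le)).1 ?_
  refine ((lintegral_exp_sub_llr_le hPR hu).trans_lt ?_).ne
  exact ((lintegral_ofReal_ne_top_iff_integrable hexp.1
    (ae_of_all _ fun _ => (exp_pos _).le)).2 hexp).lt_top

lemma integral_exp_sub_llr_le [SigmaFinite P] [SigmaFinite R] (hPR : P ≪ R) (hu : Measurable u)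
    (hexp : Integrable (fun ω => exp (u ω)) R) :
    ∫ ω, exp (u ω - llr P R ω) ∂P ≤ ∫ ω, exp (u ω) ∂ R := by
  rw [← ENNReal.ofReal_le_ofReal_iff (integral_nonneg fun _ => (exp_pos _).le),
    ofReal_integral_eq_lintegral_ofReal (integrable_exp_sub_llr hPR hu hexp)
      (ae_of_all _ fun _ => (exp_pos _).le),
    ofReal_integral_eq_lintegral_ofReal hexp (ae_of_all _ fun _ => (exp_pos _).le)]
  exact lintegral_exp_sub_llr_le hPR hu

lemma integralEReal_sub_le_relEntropy [IsProbabilityMeasure P] [IsProbabilityMeasure R]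
    (hPR : P ≪ R) (hu : Measurable u) (hexp : Integrable (fun ω => exp (u ω)) R) :
    integralEReal P u - ((∫ ω, (exp (u ω) - 1) ∂ R : ℝ) : EReal) ≤ relEntropy P R := by
  by_cases hllr : Integrable (llr P R) P
  swap
  · rw [relEntropy, if_neg fun h => hllr h.2]
    exact le_top
  have hexp_sub : Integrable (fun ω => exp (u ω - llr P R ω) - 1) P :=
    (integrable_exp_sub_llr hPR hu hexp).sub (integrable_const 1)
  have hbound : Integrable (fun ω => llr P R ω + (exp (u ω - llr P R ω) - 1)) P := hllr.add hexp_sub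
  have hu_le : integralEReal P u ≤
      ∫ ω, llr P R ω + (exp (u ω - llr P R ω) - 1) ∂P := by
    rw [← integralEReal_eq_integral hbound]
    refine integralEReal_mono_ae (ae_of_all _ fun ω => ?_)
    linarith [add_one_le_exp (u ω - llr P R ω)]
  have hbound_le : ∫ ω, llr P R ω + (exp (u ω - llr P R ω) - 1) ∂P
      ≤ ∫ ω, llr P R ω ∂P + ∫ ω, (exp (u ω) - 1) ∂ R := by
    rw [integral_add hllr hexp_sub, integral_sub (integrable_exp_sub_llr hPR hu hexp)
      (integrable_const 1), integral_sub hexp (integrable_const 1)]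
    simp only [integral_const, probReal_univ, smul_eq_mul, one_mul]
    linarith [integral_exp_sub_llr_le hPR hu hexp]
  rw [relEntropy, if_pos ⟨hPR, hllr⟩]
  refine EReal.sub_le_of_le_add (hu_le.trans ?_)
  exact_mod_cast hbound_le

end LogLikelihoodRatio

section Truncation

variable {Ω : Type*} [MeasurableSpace Ω] {P R : Measure Ω} {ε : ℝ}

lemma llr_ae_le_log_toReal_rnDeriv_add [SigmaFinite P] [SigmaFinite R] (hPR : P ≪ R)
    (hε : 0 ≤ ε) : llr P R ≤ᵐ[P] fun ω => log ((P.rnDeriv R ω).toReal + ε) := by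
  filter_upwards [Measure.rnDeriv_pos hPR, hPR.ae_le (Measure.rnDeriv_lt_top P R)] with ω hpos hlt
  exact log_le_log (ENNReal.toReal_pos hpos.ne' hlt.ne) (le_add_of_nonneg_right hε)

lemma exp_log_toReal_add (x : ℝ≥0∞) (hε : 0 < ε) : exp (log (x.toReal + ε)) = x.toReal + ε :=
  exp_log (by positivity)

lemma integrable_exp_log_toReal_rnDeriv_add [IsFiniteMeasure P] [IsFiniteMeasure R]
    (hε : 0 < ε) : Integrable (fun ω => exp (log ((P.rnDeriv R ω).toReal + ε))) R := by
  simp only [exp_log_toReal_add _ hε]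
  exact Measure.integrable_toReal_rnDeriv.add (integrable_const ε)

lemma integral_exp_log_toReal_rnDeriv_add_sub_one [IsProbabilityMeasure P]
    [IsProbabilityMeasure R] (hPR : P ≪ R) (hε : 0 < ε) :
    ∫ ω, (exp (log ((P.rnDeriv R ω).toReal + ε)) - 1) ∂ R = ε := by
  simp only [exp_log_toReal_add _ hε, add_sub_assoc]
  rw [integral_add Measure.integrable_toReal_rnDeriv (integrable_const _),
    Measure.integral_toReal_rnDeriv hPR]
  simp

lemma relEntropy_le_integralEReal_log_toReal_rnDeriv_add [IsProbabilityMeasure P]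
    [IsProbabilityMeasure R] (hPR : P ≪ R) (hε : 0 < ε) :
    relEntropy P R ≤ integralEReal P (fun ω => log ((P.rnDeriv R ω).toReal + ε))
      - ((∫ ω, (exp (log ((P.rnDeriv R ω).toReal + ε)) - 1) ∂ R : ℝ) : EReal) + ε := by
  rw [integral_exp_log_toReal_rnDeriv_add_sub_one hPR hε, EReal.sub_add_cancel,
    relEntropy_eq_integralEReal_llr hPR]
  exact integralEReal_mono_ae (llr_ae_le_log_toReal_rnDeriv_add hPR hε.le)

end Truncation

/-- `H(P|R) = sup { ∫ u dP − ∫ (e^u − 1) dR : u measurable, inf u > −∞, ∫ e^u dR < ∞ }`.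
For admissible `u`, `∫ u dP ∈ (−∞,∞]` is well-defined; it is encoded in `EReal` as
`∫⁻ u⁺ dP − ∫⁻ u⁻ dP`, where the subtracted (negative-part) term is finite since `u`
is bounded below. -/
theorem relEntropy_eq_sup_boundedBelow {Ω : Type*} [MeasurableSpace Ω]
    (P R : Measure Ω) [IsProbabilityMeasure P] [IsProbabilityMeasure R] (hPR : P ≪ R) :
    relEntropy P R =
      sSup {x : EReal | ∃ u : Ω → ℝ, Measurable u ∧ (∃ c : ℝ, ∀ ω, c ≤ u ω) ∧
        Integrable (fun ω => Real.exp (u ω)) R ∧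
        x = ((∫⁻ ω, ENNReal.ofReal (u ω) ∂P : ℝ≥0∞) : EReal)
              - ((∫⁻ ω, ENNReal.ofReal (-(u ω)) ∂P : ℝ≥0∞) : EReal)
              - ((MeasureTheory.integral R (fun ω => Real.exp (u ω) - 1) : ℝ) : EReal)} := by
  apply le_antisymm
  · refine EReal.le_of_forall_pos_le_add fun ε hε => ?_
    refine (relEntropy_le_integralEReal_log_toReal_rnDeriv_add hPR hε).trans ?_
    gcongr
    refine le_sSup ⟨_, by fun_prop, ⟨log ε, fun ω => ?_⟩,
      integrable_exp_log_toReal_rnDeriv_add hε, rfl⟩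
    exact log_le_log hε (le_add_of_nonneg_left ENNReal.toReal_nonneg)
  · refine sSup_le ?_
    rintro _ ⟨u, hu, -, hexp, rfl⟩
    exact integralEReal_sub_le_relEntropy hPR hu hexp
end

section
/- Let μ be a measure on a measurable space and let ℓ be a measurable function with values in [0, ∞). Define θ*(b) := (b+1)·log(b+1) − b for b ≥ 0. Then ∫ θ*(|ℓ − 1|) dμ < ∞ if and only if both ∫ 𝟙_{{ℓ ≤ 2}} (ℓ − 1)² dμ < ∞ and ∫ 𝟙_{{ℓ > 2}} ℓ·log ℓ dμ < ∞. -/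
/-!
Pointwise, `θ*(|ℓ - 1|)` is comparable up to constants to `(ℓ - 1)²` where `ℓ ≤ 2` and to
`ℓ log ℓ` where `ℓ > 2`; integrating these comparisons gives both implications. The lower bounds
on `θ*` come from `(√(1 + b) - 1)² ≤ θ*(b)`, the upper ones from `log (1 + b) ≤ b`.
-/

open MeasureTheory
open scoped ENNReal

noncomputable def thetaStar (b : ℝ) : ℝ := (b + 1) * Real.log (b + 1) - b

/-- With `s = √(1 + b)` one has `θ*(b) = 2 s² log s - s² + 1`, and `log s ≥ 1 - 1/s`. -/
theorem sq_sqrt_one_add_sub_one_le_thetaStar {b : ℝ} (hb : 0 ≤ b) :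
    (Real.sqrt (1 + b) - 1) ^ 2 ≤ thetaStar b := by
  set s := Real.sqrt (1 + b)
  have hs_sq : s ^ 2 = 1 + b := Real.sq_sqrt (by linarith)
  have hs_pos : 0 < s := Real.sqrt_pos.2 (by linarith)
  have hlog : Real.log (b + 1) = 2 * Real.log s := by
    rw [show b + 1 = s ^ 2 by linarith, Real.log_pow]; push_cast; ring
  have hlog_ge : 1 - s⁻¹ ≤ Real.log s := Real.one_sub_inv_le_log_of_pos hs_pos
  have hs_inv : s ^ 2 * s⁻¹ = s := by field_simp
  rw [thetaStar, hlog]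
  nlinarith [mul_le_mul_of_nonneg_left hlog_ge (by positivity : (0 : ℝ) ≤ 2 * s ^ 2)]

theorem thetaStar_nonneg {b : ℝ} (hb : 0 ≤ b) : 0 ≤ thetaStar b :=
  (sq_nonneg _).trans (sq_sqrt_one_add_sub_one_le_thetaStar hb)

theorem sq_le_six_mul_thetaStar {b : ℝ} (hb₀ : 0 ≤ b) (hb₁ : b ≤ 1) :
    b ^ 2 ≤ 6 * thetaStar b := by
  have h := sq_sqrt_one_add_sub_one_le_thetaStar hb₀
  set s := Real.sqrt (1 + b)
  have hs_sq : s ^ 2 = 1 + b := Real.sq_sqrt (by linarith)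
  have hs₁ : 1 ≤ s := Real.one_le_sqrt.2 (by linarith)
  have hs₂ : (s + 1) ^ 2 ≤ 6 := by nlinarith
  nlinarith [mul_nonneg (sq_nonneg (s - 1)) (sub_nonneg.2 hs₂)]

theorem le_six_mul_thetaStar {b : ℝ} (hb : 1 ≤ b) : b ≤ 6 * thetaStar b := by
  have h := sq_sqrt_one_add_sub_one_le_thetaStar (by linarith : (0 : ℝ) ≤ b)
  set s := Real.sqrt (1 + b)
  have hs_sq : s ^ 2 = 1 + b := Real.sq_sqrt (by linarith)
  have hs : 7 / 5 ≤ s := by nlinarith [Real.sqrt_nonneg (1 + b)]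
  nlinarith

theorem thetaStar_le_sq {b : ℝ} (hb : 0 ≤ b) : thetaStar b ≤ b ^ 2 := by
  have h := Real.log_le_sub_one_of_pos (by linarith : (0 : ℝ) < b + 1)
  rw [thetaStar]
  nlinarith

theorem thetaStar_sub_one {t : ℝ} : thetaStar (t - 1) = t * Real.log t - (t - 1) := by
  simp [thetaStar]

theorem ite_sq_le_six_mul_thetaStar {t : ℝ} (ht : 0 ≤ t) :
    (if t ≤ 2 then (t - 1) ^ 2 else 0) ≤ 6 * thetaStar |t - 1| := by
  split_ifs with h
  · rw [← sq_abs]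
    exact sq_le_six_mul_thetaStar (abs_nonneg _) (abs_le.2 ⟨by linarith, by linarith⟩)
  · linarith [thetaStar_nonneg (abs_nonneg (t - 1))]

theorem ite_mul_log_le_seven_mul_thetaStar {t : ℝ} :
    (if 2 < t then t * Real.log t else 0) ≤ 7 * thetaStar |t - 1| := by
  split_ifs with h
  · have hb := le_six_mul_thetaStar (by linarith : (1 : ℝ) ≤ t - 1)
    rw [abs_of_nonneg (by linarith : (0 : ℝ) ≤ t - 1)]
    rw [thetaStar_sub_one] at hb ⊢
    linarith
  · linarith [thetaStar_nonneg (abs_nonneg (t - 1))]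

theorem thetaStar_abs_sub_one_le_add_ite {t : ℝ} :
    thetaStar |t - 1| ≤
      (if t ≤ 2 then (t - 1) ^ 2 else 0) + (if 2 < t then t * Real.log t else 0) := by
  split_ifs with h₁ h₂ h₂
  · linarith
  · simpa [sq_abs] using thetaStar_le_sq (abs_nonneg (t - 1))
  · rw [abs_of_nonneg (by linarith : (0 : ℝ) ≤ t - 1), thetaStar_sub_one]
    linarith
  · linarith

section Lintegral

variable {α : Type*} [MeasurableSpace α] {μ : Measure α}

theorem lintegral_ofReal_lt_top_of_le_const_mul {f g : α → ℝ} {c : ℝ} (hc : 0 ≤ c)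
    (hfg : ∀ x, f x ≤ c * g x) (hg : ∫⁻ x, ENNReal.ofReal (g x) ∂μ < ∞) :
    ∫⁻ x, ENNReal.ofReal (f x) ∂μ < ∞ :=
  calc ∫⁻ x, ENNReal.ofReal (f x) ∂μ
      ≤ ∫⁻ x, ENNReal.ofReal c * ENNReal.ofReal (g x) ∂μ :=
        lintegral_mono fun x => by
          rw [← ENNReal.ofReal_mul hc]; exact ENNReal.ofReal_le_ofReal (hfg x)
    _ = ENNReal.ofReal c * ∫⁻ x, ENNReal.ofReal (g x) ∂μ :=
        lintegral_const_mul' _ _ ENNReal.ofReal_ne_top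
    _ < ∞ := ENNReal.mul_lt_top ENNReal.ofReal_lt_top hg

theorem lintegral_ofReal_lt_top_of_le_add {f g h : α → ℝ} (hg_meas : AEMeasurable g μ)
    (hfgh : ∀ x, f x ≤ g x + h x) (hg : ∫⁻ x, ENNReal.ofReal (g x) ∂μ < ∞)
    (hh : ∫⁻ x, ENNReal.ofReal (h x) ∂μ < ∞) :
    ∫⁻ x, ENNReal.ofReal (f x) ∂μ < ∞ :=
  calc ∫⁻ x, ENNReal.ofReal (f x) ∂μ
      ≤ ∫⁻ x, ENNReal.ofReal (g x) + ENNReal.ofReal (h x) ∂μ :=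
        lintegral_mono fun x => (ENNReal.ofReal_le_ofReal (hfgh x)).trans ENNReal.ofReal_add_le
    _ = ∫⁻ x, ENNReal.ofReal (g x) ∂μ + ∫⁻ x, ENNReal.ofReal (h x) ∂μ :=
        lintegral_add_left' hg_meas.ennreal_ofReal _
    _ < ∞ := ENNReal.add_lt_top.2 ⟨hg, hh⟩

end Lintegral

/-- Let `μ` be a (possibly infinite) measure and `ℓ` a measurable `[0,∞)`-valued
function. With `θ*(b) = (b+1) log (b+1) − b` for `b ≥ 0`:
`∫ θ*(|ℓ−1|) dμ < ∞` if and only if `∫ 𝟙_{ℓ≤2} (ℓ−1)² dμ < ∞` and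
`∫ 𝟙_{ℓ>2} ℓ log ℓ dμ < ∞`. -/
theorem thetaStar_integrable_iff {α : Type*} [MeasurableSpace α] (μ : Measure α)
    (ℓ : α → ℝ) (hmeas : Measurable ℓ) (hnonneg : ∀ x, 0 ≤ ℓ x) :
    (∫⁻ x, ENNReal.ofReal
        ((|ℓ x - 1| + 1) * Real.log (|ℓ x - 1| + 1) - |ℓ x - 1|) ∂μ) < ⊤ ↔
      ((∫⁻ x, ENNReal.ofReal (if ℓ x ≤ 2 then (ℓ x - 1) ^ 2 else 0) ∂μ) < ⊤ ∧
       (∫⁻ x, ENNReal.ofReal (if 2 < ℓ x then ℓ x * Real.log (ℓ x) else 0) ∂μ) < ⊤) := by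
  change (∫⁻ x, ENNReal.ofReal (thetaStar |ℓ x - 1|) ∂μ) < ⊤ ↔ _
  have hsq_meas : Measurable fun x => if ℓ x ≤ 2 then (ℓ x - 1) ^ 2 else 0 :=
    Measurable.ite (measurableSet_le hmeas measurable_const)
      ((hmeas.sub measurable_const).pow_const 2) measurable_const
  refine ⟨fun hθ => ⟨?_, ?_⟩, fun ⟨hsq, hlog⟩ => ?_⟩
  · exact lintegral_ofReal_lt_top_of_le_const_mul (by norm_num)
      (fun x => ite_sq_le_six_mul_thetaStar (hnonneg x)) hθ
  · exact lintegral_ofReal_lt_top_of_le_const_mul (by norm_num)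
      (fun x => ite_mul_log_le_seven_mul_thetaStar) hθ
  · exact lintegral_ofReal_lt_top_of_le_add hsq_meas.aemeasurable
      (fun x => thetaStar_abs_sub_one_le_add_ite) hsq hlog
end
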